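/- arXiv:math/0401424 — 5 statements merged into one kernel-verified Lean document; each statement's English description precedes it below -/
import Mathlib

section
/- Let D be a small category, R a commutative ring, and for each D-diagram of sets T with colim_D T = * (an orbit) let P_T = R(T) be the associated diagram of free R-modules. Then each P_T, viewed as an object of the category of D-diagrams of R-modules, satisfies: for every map φ : P_T → X of diagrams of R-modules there exists a point x ∈ U(colim_D X) (where U is the forgetful functor to sets) and a factorization of φ through the free diagram on the orbit T_x = * ×_{U(colim_D X)} UX over x. -/
open CategoryTheory CategoryTheory.Limits

universe u

variable (D : Type u) [SmallCategory D] (R : Type u) [CommRing R]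

/-- A `D`-diagram of sets is an orbit if its colimit is a point. -/
def IsOrbit (T : D ⥤ Type u) : Prop :=
  Nonempty (colimit T) ∧ Subsingleton (colimit T)

/-- The objectwise free `R`-module functor on diagrams. -/
noncomputable abbrev freeD : (D ⥤ Type u) ⥤ (D ⥤ ModuleCat.{u} R) :=
  (Functor.whiskeringRight D _ _).obj (ModuleCat.free R)

/-- The objectwise forgetful functor on diagrams. -/
abbrev forgetD : (D ⥤ ModuleCat.{u} R) ⥤ (D ⥤ Type u) :=
  (Functor.whiskeringRight D _ _).obj (forget _)

/-- The objectwise free-forgetful adjunction on diagrams. -/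
noncomputable def adjD : freeD D R ⊣ forgetD D R :=
  Adjunction.whiskerRight D (ModuleCat.adj R)

variable {D R}

/-- The canonical map from the underlying diagram of sets of `X` to the constant diagram
on the underlying set of `colim_D X`. -/
noncomputable def toColim (X : D ⥤ ModuleCat.{u} R) :
    (forgetD D R).obj X ⟶ (Functor.const D).obj ((forget _).obj (colimit X)) :=
  Functor.whiskerRight (colimit.cocone X).ι (forget _) ≫
    (Functor.constComp D (colimit X) (forget _)).hom

/-- The orbit `T_x = * ×_{U(colim_D X)} UX` over a point `x` of `U(colim_D X)`. -/
noncomputable def orbitOver (X : D ⥤ ModuleCat.{u} R)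
    (x : (forget _).obj (colimit X)) : D ⥤ Type u :=
  pullback (toColim X)
    ((Functor.const D).map (TypeCat.ofHom (fun _ => x : PUnit.{u+1} → (forget _).obj (colimit X))))

/-- The projection `π_x : T_x ⟶ UX`. -/
noncomputable def projOrbit (X : D ⥤ ModuleCat.{u} R)
    (x : (forget _).obj (colimit X)) : orbitOver X x ⟶ (forgetD D R).obj X :=
  pullback.fst _ _

/-- Every map from the free diagram on an orbit `T` to a diagram `X` of `R`-modules
factors through the free diagram on the orbit `T_x` over some point
`x ∈ U(colim_D X)`, via the adjoint of the projection `π_x`. -/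
theorem free_orbit_map_factors (T : D ⥤ Type u) (hT : IsOrbit D T)
    (X : D ⥤ ModuleCat.{u} R) (φ : (freeD D R).obj T ⟶ X) :
    ∃ (x : (forget _).obj (colimit X))
      (ψ : (freeD D R).obj T ⟶ (freeD D R).obj (orbitOver X x)),
      ψ ≫ ((adjD D R).homEquiv (orbitOver X x) X).symm (projOrbit X x) = φ := by
  obtain ⟨⟨p⟩, hsub⟩ := hT
  set f := (adjD D R).homEquiv T X φ with hf
  let g : T ⟶ (Functor.const D).obj ((forget _).obj (colimit X)) := f ≫ toColim X
  let c : Cocone T := ⟨_, g⟩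
  let x := colimit.desc T c p
  have hg : ∀ d (t : T.obj d), g.app d t = x := by
    intro d t
    have h1 : colimit.ι T d ≫ colimit.desc T c = g.app d := colimit.ι_desc c d
    have h2 := types_congr_hom h1 t
    simp only [types_comp_apply] at h2
    rw [← h2, Subsingleton.elim (colimit.ι T d t) p]
  let h2 : T ⟶ (Functor.const D).obj PUnit.{u+1} :=
    { app := fun d => TypeCat.ofHom (fun _ => PUnit.unit) }
  have cond : f ≫ toColim X =
      h2 ≫ (Functor.const D).map (TypeCat.ofHom (fun _ => x : PUnit.{u+1} → (forget _).obj (colimit X))) := by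
    ext d t
    exact hg d t
  refine ⟨x, (freeD D R).map (pullback.lift f h2 cond : T ⟶ orbitOver X x), ?_⟩
  rw [projOrbit]
  unfold orbitOver
  rw [← Adjunction.homEquiv_naturality_left_symm, pullback.lift_fst]
  simp [hf]
end

section
/- Let C be any category. The obvious functor F : pro-(Map C) → Map(pro-C), from the pro-category of the arrow category of C to the arrow category of the pro-category of C, is fully faithful and essentially surjective; hence pro-(Map C) and Map(pro-C) are equivalent categories. -/
open CategoryTheory CategoryTheory.Limits Opposite

universe v u

/-- A pro-object of `C`: a cofiltering (cofiltered) diagram in `C`. -/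
structure ProObj (C : Type u) [Category.{v} C] : Type (max u (v + 1)) where
  /-- the (small) indexing category -/
  I : Type v
  [cat : SmallCategory I]
  [cofil : IsCofiltered I]
  /-- the diagram -/
  X : I ⥤ C

attribute [instance] ProObj.cat ProObj.cofil

variable {C : Type u} [Category.{v} C]

/-- The co-presheaf `c ↦ colim_i Hom(X_i, c)` associated to a pro-object `X`.
By the co-Yoneda lemma, natural transformations `proEmbed Y ⟶ proEmbed X` compute
`lim_i colim_j Hom(X_j, Y_i)`, i.e. maps of pro-objects `X ⟶ Y`. -/
noncomputable def proEmbed (X : ProObj C) : C ⥤ Type v :=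
  colimit (X.X.op ⋙ coyoneda)

/-- A morphism of pro-objects `X ⟶ Y`: a natural transformation
`proEmbed Y ⟶ proEmbed X`; by the co-Yoneda lemma this is exactly an element of
`lim_i colim_j Hom(X_j, Y_i)`. -/
structure ProHom (X Y : ProObj C) : Type (max u v) where
  /-- the underlying natural transformation -/
  nt : proEmbed Y ⟶ proEmbed X

noncomputable instance : Category.{max u v} (ProObj C) where
  Hom := ProHom
  id X := ⟨𝟙 (proEmbed X)⟩
  comp f g := ⟨g.nt ≫ f.nt⟩
  id_comp f := congrArg ProHom.mk (Category.comp_id f.nt)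
  comp_id f := congrArg ProHom.mk (Category.id_comp f.nt)
  assoc f g h := congrArg ProHom.mk (Category.assoc h.nt g.nt f.nt).symm

/-! ### generators of `proEmbed` -/

noncomputable def epx (X : ProObj C) (i : X.I) {c : C} (u : X.X.obj i ⟶ c) :
    (proEmbed X).obj c :=
  (colimit.ι (X.X.op ⋙ coyoneda) (op i)).app c u

theorem epx_map (X : ProObj C) (i : X.I) {c c' : C} (u : X.X.obj i ⟶ c) (g : c ⟶ c') :
    (proEmbed X).map g (epx X i u) = epx X i (u ≫ g) :=
  (ConcreteCategory.congr_hom ((colimit.ι (X.X.op ⋙ coyoneda) (op i)).naturality g) u).symm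

theorem epx_pred (X : ProObj C) {i i' : X.I} (v : i ⟶ i') {c : C} (w : X.X.obj i' ⟶ c) :
    epx X i' w = epx X i (X.X.map v ≫ w) :=
  (ConcreteCategory.congr_hom (congrArg (fun t => NatTrans.app t c) (colimit.w (X.X.op ⋙ coyoneda) v.op)) w).symm

theorem epx_surjective (X : ProObj C) {c : C} (x : (proEmbed X).obj c) :
    ∃ (i : X.I) (u : X.X.obj i ⟶ c), x = epx X i u := by
  obtain ⟨j, y, hy⟩ := Types.jointly_surjective'
    ((colimitObjIsoColimitCompEvaluation (X.X.op ⋙ coyoneda) c).hom x)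
  refine ⟨j.unop, y, ?_⟩
  have hxx : (colimitObjIsoColimitCompEvaluation (X.X.op ⋙ coyoneda) c).inv
      ((colimitObjIsoColimitCompEvaluation (X.X.op ⋙ coyoneda) c).hom x) = x :=
    ConcreteCategory.congr_hom (colimitObjIsoColimitCompEvaluation (X.X.op ⋙ coyoneda) c).hom_inv_id x
  rw [← hxx, ← hy, epx]
  exact ConcreteCategory.congr_hom (colimitObjIsoColimitCompEvaluation_ι_inv (X.X.op ⋙ coyoneda) j c) y

theorem epx_eq (X : ProObj C) {i i' : X.I} {c : C} {u : X.X.obj i ⟶ c} {u' : X.X.obj i' ⟶ c}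
    (h : epx X i u = epx X i' u') :
    ∃ (i'' : X.I) (a : i'' ⟶ i) (b : i'' ⟶ i'), X.X.map a ≫ u = X.X.map b ≫ u' := by
  have h2 : colimit.ι ((X.X.op ⋙ coyoneda) ⋙ (evaluation C (Type v)).obj c) (op i) u =
      colimit.ι ((X.X.op ⋙ coyoneda) ⋙ (evaluation C (Type v)).obj c) (op i') u' := by
    have e1 := ConcreteCategory.congr_hom (colimitObjIsoColimitCompEvaluation_ι_app_hom (X.X.op ⋙ coyoneda) (op i) c) u
    have e2 := ConcreteCategory.congr_hom (colimitObjIsoColimitCompEvaluation_ι_app_hom (X.X.op ⋙ coyoneda) (op i') c) u'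
    dsimp at e1 e2
    rw [← e1, ← e2]
    exact congrArg _ h
  rw [Types.FilteredColimit.colimit_eq_iff] at h2
  obtain ⟨k, f, g, hfg⟩ := h2
  exact ⟨k.unop, f.unop, g.unop, hfg⟩

/-! ### descending natural transformations out of `proEmbed` -/

/-- Build a natural transformation `proEmbed Y ⟶ G` from a compatible family of elements
`s j : G.obj (Y.X.obj j)`. -/
noncomputable def descNT (Y : ProObj C) (G : C ⥤ Type v)
    (s : ∀ j : Y.I, G.obj (Y.X.obj j))
    (hs : ∀ {j j' : Y.I} (v : j ⟶ j'), G.map (Y.X.map v) (s j) = s j') :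
    proEmbed Y ⟶ G :=
  colimit.desc (Y.X.op ⋙ coyoneda)
    { pt := G
      ι :=
        { app := fun j =>
            { app := fun c => TypeCat.ofHom (fun u => G.map u (s j.unop))
              naturality := fun c c' m => by
                ext u
                exact (FunctorToTypes.map_comp_apply G u m (s j.unop)) }
          naturality := fun j j' v => by
            ext c u
            change G.map (Y.X.map v.unop ≫ u) (s j'.unop) = G.map u (s j.unop)
            rw [FunctorToTypes.map_comp_apply, hs v.unop] } }

theorem descNT_epx (Y : ProObj C) (G : C ⥤ Type v)
    (s : ∀ j : Y.I, G.obj (Y.X.obj j))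
    (hs : ∀ {j j' : Y.I} (v : j ⟶ j'), G.map (Y.X.map v) (s j) = s j')
    (j : Y.I) {c : C} (u : Y.X.obj j ⟶ c) :
    (descNT Y G s hs).app c (epx Y j u) = G.map u (s j) := by
  have := congrArg (fun t => NatTrans.app t c) (colimit.ι_desc
    (F := Y.X.op ⋙ coyoneda)
    { pt := G
      ι :=
        { app := fun j =>
            { app := fun c => TypeCat.ofHom (fun u => G.map u (s j.unop))
              naturality := fun c c' m => by
                ext u
                exact (FunctorToTypes.map_comp_apply G u m (s j.unop)) }
          naturality := fun j j' v => by
            ext c u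
            change G.map (Y.X.map v.unop ≫ u) (s j'.unop) = G.map u (s j.unop)
            rw [FunctorToTypes.map_comp_apply, hs v.unop] } } (op j))
  exact ConcreteCategory.congr_hom this u

/-- Build a morphism of pro-objects from a compatible family. -/
noncomputable def proHomMk {X Y : ProObj C}
    (s : ∀ j : Y.I, (proEmbed X).obj (Y.X.obj j))
    (hs : ∀ {j j' : Y.I} (v : j ⟶ j'), (proEmbed X).map (Y.X.map v) (s j) = s j') :
    X ⟶ Y :=
  ProHom.mk (descNT Y (proEmbed X) s hs)

theorem proHomMk_epx {X Y : ProObj C}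
    (s : ∀ j : Y.I, (proEmbed X).obj (Y.X.obj j))
    (hs : ∀ {j j' : Y.I} (v : j ⟶ j'), (proEmbed X).map (Y.X.map v) (s j) = s j')
    (j : Y.I) {c : C} (u : Y.X.obj j ⟶ c) :
    (proHomMk s hs).nt.app c (epx Y j u) = (proEmbed X).map u (s j) :=
  descNT_epx Y (proEmbed X) s hs j u

/-! ### the `τ` family of a morphism -/

noncomputable def tau {X Y : ProObj C} (f : X ⟶ Y) (j : Y.I) :
    (proEmbed X).obj (Y.X.obj j) :=
  f.nt.app (Y.X.obj j) (epx Y j (𝟙 (Y.X.obj j)))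

theorem nt_epx {X Y : ProObj C} (f : X ⟶ Y) (j : Y.I) {c : C} (u : Y.X.obj j ⟶ c) :
    f.nt.app c (epx Y j u) = (proEmbed X).map u (tau f j) := by
  have h1 : epx Y j u = (proEmbed Y).map u (epx Y j (𝟙 _)) := by
    rw [epx_map, Category.id_comp]
  rw [h1]
  exact ConcreteCategory.congr_hom (f.nt.naturality u) (epx Y j (𝟙 _))

theorem tau_compat {X Y : ProObj C} (f : X ⟶ Y) {j j' : Y.I} (v : j ⟶ j') :
    (proEmbed X).map (Y.X.map v) (tau f j) = tau f j' := by
  rw [← nt_epx f j (Y.X.map v), tau, epx_pred Y v, Category.comp_id]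

theorem tau_proHomMk {X Y : ProObj C}
    (s : ∀ j : Y.I, (proEmbed X).obj (Y.X.obj j))
    (hs : ∀ {j j' : Y.I} (v : j ⟶ j'), (proEmbed X).map (Y.X.map v) (s j) = s j')
    (j : Y.I) : tau (proHomMk s hs) j = s j := by
  rw [tau, proHomMk_epx, CategoryTheory.FunctorToTypes.map_id_apply]

theorem prohom_ext {X Y : ProObj C} {f g : X ⟶ Y} (h : ∀ j, tau f j = tau g j) : f = g := by
  have hnt : f.nt = g.nt := by
    ext c x
    change (f.nt.app c) x = (g.nt.app c) x
    obtain ⟨j, u, rfl⟩ := epx_surjective Y x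
    rw [nt_epx f j u, nt_epx g j u, h j]
  cases f using ProHom.casesOn; cases g using ProHom.casesOn; cases hnt; rfl

theorem tau_comp {X Y Z : ProObj C} (f : X ⟶ Y) (g : Y ⟶ Z) (k : Z.I) :
    tau (f ≫ g) k = f.nt.app (Z.X.obj k) (tau g k) := rfl

theorem tau_id (X : ProObj C) (j : X.I) : tau (𝟙 X) j = epx X j (𝟙 _) := rfl

/-! ### functoriality along a functor `G : C ⥤ D` -/

universe u₂

variable {D : Type u₂} [Category.{v} D]

/-- Push a pro-object forward along a functor. -/
@[reducible]
def mapPro (G : C ⥤ D) (W : ProObj C) : ProObj D := ⟨W.I, W.X ⋙ G⟩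

theorem mapNT_compat (G : C ⥤ D) (W : ProObj C) :
    ∀ {j j' : W.I} (v : j ⟶ j'),
      (G ⋙ proEmbed (mapPro G W)).map (W.X.map v)
        (epx (mapPro G W) j (𝟙 (G.obj (W.X.obj j)))) =
      epx (mapPro G W) j' (𝟙 (G.obj (W.X.obj j'))) := by
  intro j j' v
  have h1 : (G ⋙ proEmbed (mapPro G W)).map (W.X.map v)
        (epx (mapPro G W) j (𝟙 (G.obj (W.X.obj j)))) =
      (proEmbed (mapPro G W)).map (G.map (W.X.map v))
        (epx (mapPro G W) j (𝟙 (G.obj (W.X.obj j)))) := rfl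
  rw [h1]
  erw [epx_map]
  have h2 : epx (mapPro G W) j' (𝟙 (G.obj (W.X.obj j'))) =
      epx (mapPro G W) j ((mapPro G W).X.map v ≫ 𝟙 (G.obj (W.X.obj j'))) :=
    epx_pred (mapPro G W) v _
  rw [h2]
  exact congrArg (epx (mapPro G W) j)
    ((Category.id_comp (G.map (W.X.map v))).trans
      (Eq.symm (Category.comp_id ((mapPro G W).X.map v))))

/-- The canonical natural transformation `proEmbed W ⟶ G ⋙ proEmbed (mapPro G W)`. -/
noncomputable def mapNT (G : C ⥤ D) (W : ProObj C) :
    proEmbed W ⟶ G ⋙ proEmbed (mapPro G W) :=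
  descNT W (G ⋙ proEmbed (mapPro G W))
    (fun j => epx (mapPro G W) j (𝟙 (G.obj (W.X.obj j))))
    (mapNT_compat G W)

theorem mapNT_epx (G : C ⥤ D) (W : ProObj C) (j : W.I) {c : C} (u : W.X.obj j ⟶ c) :
    (mapNT G W).app c (epx W j u) = epx (mapPro G W) j (G.map u) := by
  rw [mapNT, descNT_epx]
  change (proEmbed (mapPro G W)).map (G.map u) _ = _
  erw [epx_map]
  exact congrArg (epx (mapPro G W) j) (Category.id_comp (G.map u))

/-! ### the functor `F` on objects and morphisms -/

/-- `L W`, the pro-object of domains. -/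
noncomputable abbrev LP (W : ProObj (Arrow C)) : ProObj C := mapPro Arrow.leftFunc W

/-- `R W`, the pro-object of codomains. -/
noncomputable abbrev RP (W : ProObj (Arrow C)) : ProObj C := mapPro Arrow.rightFunc W

theorem phi_compat (W : ProObj (Arrow C)) {j j' : W.I} (v : j ⟶ j') :
    (proEmbed (LP W)).map ((RP W).X.map v) (epx (LP W) j (W.X.obj j).hom) =
      epx (LP W) j' (W.X.obj j').hom := by
  erw [epx_map]
  have h1 : (W.X.obj j).hom ≫ (RP W).X.map v = (W.X.map v).left ≫ (W.X.obj j').hom :=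
    (Arrow.w (W.X.map v)).symm
  erw [h1]
  exact (epx_pred (LP W) v (W.X.obj j').hom).symm

/-- the canonical arrow `L W ⟶ R W` of pro-objects -/
noncomputable def phi (W : ProObj (Arrow C)) : LP W ⟶ RP W :=
  proHomMk (fun j => epx (LP W) j (W.X.obj j).hom) (phi_compat W)

theorem Fleft_compat {W W' : ProObj (Arrow C)} (f : W ⟶ W') {j j' : W'.I} (v : j ⟶ j') :
    (proEmbed (LP W)).map ((LP W').X.map v)
        ((mapNT Arrow.leftFunc W).app (W'.X.obj j) (tau f j)) =
      (mapNT Arrow.leftFunc W).app (W'.X.obj j') (tau f j') := by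
  have h1 : (proEmbed (LP W)).map ((LP W').X.map v)
        ((mapNT Arrow.leftFunc W).app (W'.X.obj j) (tau f j)) =
      (mapNT Arrow.leftFunc W).app (W'.X.obj j')
        ((proEmbed W).map (W'.X.map v) (tau f j)) :=
    (ConcreteCategory.congr_hom ((mapNT Arrow.leftFunc W).naturality (W'.X.map v)) (tau f j)).symm
  rw [h1, tau_compat]

theorem Fright_compat {W W' : ProObj (Arrow C)} (f : W ⟶ W') {j j' : W'.I} (v : j ⟶ j') :
    (proEmbed (RP W)).map ((RP W').X.map v)
        ((mapNT Arrow.rightFunc W).app (W'.X.obj j) (tau f j)) =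
      (mapNT Arrow.rightFunc W).app (W'.X.obj j') (tau f j') := by
  have h1 : (proEmbed (RP W)).map ((RP W').X.map v)
        ((mapNT Arrow.rightFunc W).app (W'.X.obj j) (tau f j)) =
      (mapNT Arrow.rightFunc W).app (W'.X.obj j')
        ((proEmbed W).map (W'.X.map v) (tau f j)) :=
    (ConcreteCategory.congr_hom ((mapNT Arrow.rightFunc W).naturality (W'.X.map v)) (tau f j)).symm
  rw [h1, tau_compat]

/-- left component of `F` on morphisms -/
noncomputable def Fleft {W W' : ProObj (Arrow C)} (f : W ⟶ W') : LP W ⟶ LP W' :=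
  proHomMk (fun j' => (mapNT Arrow.leftFunc W).app (W'.X.obj j') (tau f j'))
    (Fleft_compat f)

/-- right component of `F` on morphisms -/
noncomputable def Fright {W W' : ProObj (Arrow C)} (f : W ⟶ W') : RP W ⟶ RP W' :=
  proHomMk (fun j' => (mapNT Arrow.rightFunc W).app (W'.X.obj j') (tau f j'))
    (Fright_compat f)

/-- joint injectivity of the left- and right- projections on `proEmbed W` -/
theorem keyInj (W : ProObj (Arrow C)) {A : Arrow C} {x y : (proEmbed W).obj A}
    (hl : (mapNT Arrow.leftFunc W).app A x = (mapNT Arrow.leftFunc W).app A y)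
    (hr : (mapNT Arrow.rightFunc W).app A x = (mapNT Arrow.rightFunc W).app A y) :
    x = y := by
  obtain ⟨j, g, rfl⟩ := epx_surjective W x
  obtain ⟨k, g', rfl⟩ := epx_surjective W y
  rw [mapNT_epx, mapNT_epx] at hl hr
  obtain ⟨j₂, a, b, hab⟩ := epx_eq _ hl
  obtain ⟨j₃, a', b', hab'⟩ := epx_eq _ hr
  -- combine
  let j₄ := IsCofiltered.min j₂ j₃
  let r : j₄ ⟶ j₂ := IsCofiltered.minToLeft j₂ j₃
  let s : j₄ ⟶ j₃ := IsCofiltered.minToRight j₂ j₃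
  let j₅ := IsCofiltered.eq (r ≫ a) (s ≫ a')
  let t : j₅ ⟶ j₄ := IsCofiltered.eqHom (r ≫ a) (s ≫ a')
  have ht : t ≫ (r ≫ a) = t ≫ (s ≫ a') := IsCofiltered.eq_condition _ _
  let j₆ := IsCofiltered.eq (t ≫ r ≫ b) (t ≫ s ≫ b')
  let q : j₆ ⟶ j₅ := IsCofiltered.eqHom (t ≫ r ≫ b) (t ≫ s ≫ b')
  have hq : q ≫ (t ≫ r ≫ b) = q ≫ (t ≫ s ≫ b') := IsCofiltered.eq_condition _ _
  let p : j₆ ⟶ j₂ := q ≫ t ≫ r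
  have hL : (W.X.map a).left ≫ g.left = (W.X.map b).left ≫ g'.left := hab
  have hR : (W.X.map a').right ≫ g.right = (W.X.map b').right ≫ g'.right := hab'
  have hpa : p ≫ a = (q ≫ t ≫ s) ≫ a' := by
    simp only [p, Category.assoc]
    exact congrArg (fun z => q ≫ z) ht
  have hpb : p ≫ b = (q ≫ t ≫ s) ≫ b' := by
    simp only [p, Category.assoc]
    exact hq
  have key : W.X.map (p ≫ a) ≫ g = W.X.map (p ≫ b) ≫ g' := by
    ext
    · simp only [Functor.map_comp, Arrow.comp_left, Comma.comp_left, Category.assoc]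
      rw [hL]
    · rw [hpa, hpb]
      simp only [Functor.map_comp, Arrow.comp_right, Comma.comp_right, Category.assoc]
      rw [hR]
  calc epx W j g = epx W j₆ (W.X.map (p ≫ a) ≫ g) := epx_pred W (p ≫ a) g
    _ = epx W j₆ (W.X.map (p ≫ b) ≫ g') := by rw [key]
    _ = epx W k g' := (epx_pred W (p ≫ b) g').symm

theorem tau_phi (W : ProObj (Arrow C)) (j : W.I) :
    tau (phi W) j = epx (LP W) j (W.X.obj j).hom :=
  tau_proHomMk (X := LP W) (Y := RP W) (fun j => epx (LP W) j (W.X.obj j).hom)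
    (phi_compat W) j

theorem phi_epx (W : ProObj (Arrow C)) (j : W.I) {c : C} (u : (RP W).X.obj j ⟶ c) :
    (phi W).nt.app c (epx (RP W) j u) =
      (proEmbed (LP W)).map u (epx (LP W) j (W.X.obj j).hom) :=
  proHomMk_epx (X := LP W) (Y := RP W) (fun j => epx (LP W) j (W.X.obj j).hom)
    (phi_compat W) j u

theorem tau_Fleft {W W' : ProObj (Arrow C)} (f : W ⟶ W') (j' : W'.I) :
    tau (Fleft f) j' = (mapNT Arrow.leftFunc W).app (W'.X.obj j') (tau f j') :=
  tau_proHomMk (X := LP W) (Y := LP W')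
    (fun j' => (mapNT Arrow.leftFunc W).app (W'.X.obj j') (tau f j')) (Fleft_compat f) j'

theorem tau_Fright {W W' : ProObj (Arrow C)} (f : W ⟶ W') (j' : W'.I) :
    tau (Fright f) j' = (mapNT Arrow.rightFunc W).app (W'.X.obj j') (tau f j') :=
  tau_proHomMk (X := RP W) (Y := RP W')
    (fun j' => (mapNT Arrow.rightFunc W).app (W'.X.obj j') (tau f j')) (Fright_compat f) j'

theorem Fleft_epx {W W' : ProObj (Arrow C)} (f : W ⟶ W') (j' : W'.I) {c : C}
    (u : (LP W').X.obj j' ⟶ c) :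
    (Fleft f).nt.app c (epx (LP W') j' u) =
      (proEmbed (LP W)).map u ((mapNT Arrow.leftFunc W).app (W'.X.obj j') (tau f j')) :=
  proHomMk_epx (X := LP W) (Y := LP W')
    (fun j' => (mapNT Arrow.leftFunc W).app (W'.X.obj j') (tau f j')) (Fleft_compat f) j' u

theorem Fright_epx {W W' : ProObj (Arrow C)} (f : W ⟶ W') (j' : W'.I) {c : C}
    (u : (RP W').X.obj j' ⟶ c) :
    (Fright f).nt.app c (epx (RP W') j' u) =
      (proEmbed (RP W)).map u ((mapNT Arrow.rightFunc W).app (W'.X.obj j') (tau f j')) :=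
  proHomMk_epx (X := RP W) (Y := RP W')
    (fun j' => (mapNT Arrow.rightFunc W).app (W'.X.obj j') (tau f j')) (Fright_compat f) j' u

theorem Fsquare {W W' : ProObj (Arrow C)} (f : W ⟶ W') :
    Fleft f ≫ phi W' = phi W ≫ Fright f := by
  apply prohom_ext
  intro j'
  rw [tau_comp, tau_comp, tau_phi, tau_Fright]
  obtain ⟨j, g, hg⟩ := epx_surjective W (tau f j')
  rw [hg, mapNT_epx]
  erw [Fleft_epx, hg, mapNT_epx, phi_epx, epx_map, epx_map]
  exact congrArg (epx (LP W) j) (Arrow.w g)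

theorem Fleft_id (W : ProObj (Arrow C)) : Fleft (𝟙 W) = 𝟙 (LP W) := by
  apply prohom_ext
  intro j
  rw [tau_Fleft, tau_id, tau_id, mapNT_epx]
  exact congrArg (epx (LP W) j) (Arrow.leftFunc.map_id (W.X.obj j))

theorem Fright_id (W : ProObj (Arrow C)) : Fright (𝟙 W) = 𝟙 (RP W) := by
  apply prohom_ext
  intro j
  rw [tau_Fright, tau_id, tau_id, mapNT_epx]
  exact congrArg (epx (RP W) j) (Arrow.rightFunc.map_id (W.X.obj j))

theorem Fleft_comp {W W' W'' : ProObj (Arrow C)} (f : W ⟶ W') (g : W' ⟶ W'') :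
    Fleft (f ≫ g) = Fleft f ≫ Fleft g := by
  apply prohom_ext
  intro j''
  rw [tau_Fleft, tau_comp, tau_comp, tau_Fleft]
  obtain ⟨j', h, hh⟩ := epx_surjective W' (tau g j'')
  rw [hh, mapNT_epx, Fleft_epx]
  rw [nt_epx f j' h]
  exact ConcreteCategory.congr_hom ((mapNT Arrow.leftFunc W).naturality h) (tau f j')

theorem Fright_comp {W W' W'' : ProObj (Arrow C)} (f : W ⟶ W') (g : W' ⟶ W'') :
    Fright (f ≫ g) = Fright f ≫ Fright g := by
  apply prohom_ext
  intro j''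
  rw [tau_Fright, tau_comp, tau_comp, tau_Fright]
  obtain ⟨j', h, hh⟩ := epx_surjective W' (tau g j'')
  rw [hh, mapNT_epx, Fright_epx]
  rw [nt_epx f j' h]
  exact ConcreteCategory.congr_hom ((mapNT Arrow.rightFunc W).naturality h) (tau f j')

/-- Meyer's functor `pro-(Map C) ⥤ Map (pro-C)`. -/
noncomputable def meyerF : ProObj (Arrow C) ⥤ Arrow (ProObj C) where
  obj W := Arrow.mk (phi W)
  map {W W'} f := Arrow.homMk (u := Fleft f) (v := Fright f) (Fsquare f)
  map_id W := by
    ext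
    · exact Fleft_id W
    · exact Fright_id W
  map_comp {W W' W''} f g := by
    ext
    · exact Fleft_comp f g
    · exact Fright_comp f g

theorem meyerF_faithful : (meyerF (C := C)).Faithful where
  map_injective {W W'} {f f'} h := by
    have hl : Fleft f = Fleft f' := congrArg CommaMorphism.left h
    have hr : Fright f = Fright f' := congrArg CommaMorphism.right h
    apply prohom_ext
    intro j'
    apply keyInj W
    · rw [← tau_Fleft f j', ← tau_Fleft f' j', hl]
    · rw [← tau_Fright f j', ← tau_Fright f' j', hr]

theorem full_preimage_exists {W W' : ProObj (Arrow C)}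
    (fl : LP W ⟶ LP W') (fr : RP W ⟶ RP W')
    (w : fl ≫ phi W' = phi W ≫ fr) (j' : W'.I) :
    ∃ z : (proEmbed W).obj (W'.X.obj j'),
      (mapNT Arrow.leftFunc W).app (W'.X.obj j') z = tau fl j' ∧
      (mapNT Arrow.rightFunc W).app (W'.X.obj j') z = tau fr j' := by
  obtain ⟨i₁, u, hu⟩ := epx_surjective (LP W) (tau fl j')
  obtain ⟨i₂, r, hr⟩ := epx_surjective (RP W) (tau fr j')
  have hw : tau (fl ≫ phi W') j' = tau (phi W ≫ fr) j' := by rw [w]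
  rw [tau_comp, tau_comp, tau_phi] at hw
  erw [show fl.nt.app ((RP W').X.obj j') (epx (LP W') j' (W'.X.obj j').hom) =
        (proEmbed (LP W)).map (W'.X.obj j').hom (tau fl j') from
      nt_epx fl j' (W'.X.obj j').hom] at hw
  rw [hu] at hw
  erw [epx_map, hr, phi_epx, epx_map] at hw
  obtain ⟨i₃, a, b, hab⟩ := epx_eq _ hw
  have hab' : (W.X.map a).left ≫ u ≫ (W'.X.obj j').hom =
      (W.X.map b).left ≫ (W.X.obj i₂).hom ≫ r := hab
  have hsq : ((W.X.map a).left ≫ u) ≫ (W'.X.obj j').hom =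
      (W.X.obj i₃).hom ≫ ((W.X.map b).right ≫ r) := by
    erw [Category.assoc, hab', ← Category.assoc, Arrow.w (W.X.map b), Category.assoc]
  refine ⟨epx W i₃ (Arrow.homMk (u := (W.X.map a).left ≫ u)
      (v := (W.X.map b).right ≫ r) hsq), ?_, ?_⟩
  · rw [mapNT_epx, hu]
    have e1 : Arrow.leftFunc.map (Arrow.homMk (u := (W.X.map a).left ≫ u)
        (v := (W.X.map b).right ≫ r) hsq) = (LP W).X.map a ≫ u := rfl
    rw [e1]
    exact (epx_pred (LP W) a u).symm
  · rw [mapNT_epx, hr]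
    have e1 : Arrow.rightFunc.map (Arrow.homMk (u := (W.X.map a).left ≫ u)
        (v := (W.X.map b).right ≫ r) hsq) = (RP W).X.map b ≫ r := rfl
    rw [e1]
    exact (epx_pred (RP W) b r).symm

theorem meyerF_full : (meyerF (C := C)).Full where
  map_surjective {W W'} sq := by
    have w : sq.left ≫ phi W' = phi W ≫ sq.right := sq.w
    choose z hzl hzr using full_preimage_exists sq.left sq.right w
    have hcompat : ∀ {j j' : W'.I} (v : j ⟶ j'),
        (proEmbed W).map (W'.X.map v) (z j) = z j' := by
      intro j j' v
      apply keyInj W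
      · have n1 : (mapNT Arrow.leftFunc W).app (W'.X.obj j')
            ((proEmbed W).map (W'.X.map v) (z j)) =
            (proEmbed (LP W)).map ((LP W').X.map v)
              ((mapNT Arrow.leftFunc W).app (W'.X.obj j) (z j)) :=
          ConcreteCategory.congr_hom ((mapNT Arrow.leftFunc W).naturality (W'.X.map v)) (z j)
        rw [n1, hzl, hzl]
        exact tau_compat sq.left v
      · have n1 : (mapNT Arrow.rightFunc W).app (W'.X.obj j')
            ((proEmbed W).map (W'.X.map v) (z j)) =
            (proEmbed (RP W)).map ((RP W').X.map v)
              ((mapNT Arrow.rightFunc W).app (W'.X.obj j) (z j)) :=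
          ConcreteCategory.congr_hom ((mapNT Arrow.rightFunc W).naturality (W'.X.map v)) (z j)
        rw [n1, hzr, hzr]
        exact tau_compat sq.right v
    refine ⟨proHomMk z hcompat, ?_⟩
    ext
    · show Fleft (proHomMk z hcompat) = sq.left
      apply prohom_ext
      intro j'
      rw [tau_Fleft, tau_proHomMk z hcompat j', hzl]
    · show Fright (proHomMk z hcompat) = sq.right
      apply prohom_ext
      intro j'
      rw [tau_Fright, tau_proHomMk z hcompat j', hzr]

/-! ### essential surjectivity: the level category of a pro-arrow -/

variable (X Y : ProObj C) (t : ∀ j : Y.I, (proEmbed X).obj (Y.X.obj j))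

/-- The category of level representations of the compatible family `t`. -/
structure MKey : Type v where
  i : X.I
  j : Y.I
  g : X.X.obj i ⟶ Y.X.obj j
  hg : epx X i g = t j

instance : SmallCategory (MKey X Y t) where
  Hom k k' := {p : (k.i ⟶ k'.i) × (k.j ⟶ k'.j) //
    k.g ≫ Y.X.map p.2 = X.X.map p.1 ≫ k'.g}
  id k := ⟨(𝟙 k.i, 𝟙 k.j), by simp⟩
  comp {k k' k''} m m' := ⟨(m.1.1 ≫ m'.1.1, m.1.2 ≫ m'.1.2), by
    rw [Y.X.map_comp, X.X.map_comp, ← Category.assoc, m.2, Category.assoc, m'.2,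
      Category.assoc]⟩
  id_comp m := by apply Subtype.ext; simp
  comp_id m := by apply Subtype.ext; simp
  assoc m m' m'' := by apply Subtype.ext; simp

/-- first projection -/
def PIfun : MKey X Y t ⥤ X.I where
  obj k := k.i
  map m := m.1.1

/-- second projection -/
def PJfun : MKey X Y t ⥤ Y.I where
  obj k := k.j
  map m := m.1.2

/-- the canonical diagram of arrows -/
def DKey : MKey X Y t ⥤ Arrow C where
  obj k := Arrow.mk k.g
  map {k k'} m := Arrow.homMk (u := X.X.map m.1.1) (v := Y.X.map m.1.2) m.2.symm
  map_id k := by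
    ext
    · show X.X.map (𝟙 k.i) = 𝟙 (X.X.obj k.i)
      rw [X.X.map_id]
    · show Y.X.map (𝟙 k.j) = 𝟙 (Y.X.obj k.j)
      rw [Y.X.map_id]
  map_comp {k k' k''} m m' := by
    ext
    · show X.X.map (m.1.1 ≫ m'.1.1) = X.X.map m.1.1 ≫ X.X.map m'.1.1
      rw [X.X.map_comp]
    · show Y.X.map (m.1.2 ≫ m'.1.2) = Y.X.map m.1.2 ≫ Y.X.map m'.1.2
      rw [Y.X.map_comp]

/-- a level representation over any index `j` -/
noncomputable def mkOver (j : Y.I) : MKey X Y t :=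
  ⟨(epx_surjective X (t j)).choose, j,
    (epx_surjective X (t j)).choose_spec.choose,
    (epx_surjective X (t j)).choose_spec.choose_spec.symm⟩

theorem mkOver_j (j : Y.I) : (mkOver X Y t j).j = j := rfl

variable {X Y t}
variable (ht : ∀ {j j' : Y.I} (v : j ⟶ j'), (proEmbed X).map (Y.X.map v) (t j) = t j')

/-- refine the `X`-index of a level representation -/
theorem MKey.refine (k : MKey X Y t) {i₂ : X.I} (e : i₂ ⟶ k.i) :
    ∃ (k' : MKey X Y t) (m : k' ⟶ k), k'.i = i₂ ∧ HEq m.1.1 e ∧ HEq m.1.2 (𝟙 k.j) := by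
  refine ⟨⟨i₂, k.j, X.X.map e ≫ k.g, by rw [← epx_pred X e k.g, k.hg]⟩,
    ⟨(e, 𝟙 k.j), by simp⟩, rfl, HEq.rfl, HEq.rfl⟩

include ht in
/-- refine the `Y`-index of a level representation -/
theorem MKey.jrefine (k : MKey X Y t) {j₂ : Y.I} (d : j₂ ⟶ k.j) :
    ∃ (i₅ : X.I) (g₂ : X.X.obj i₅ ⟶ Y.X.obj j₂) (_ : epx X i₅ g₂ = t j₂)
      (q : i₅ ⟶ k.i), g₂ ≫ Y.X.map d = X.X.map q ≫ k.g := by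
  obtain ⟨i₄, h, hh⟩ := epx_surjective X (t j₂)
  have h1 : epx X i₄ (h ≫ Y.X.map d) = epx X k.i k.g := by
    rw [← epx_map, ← hh, ht d, k.hg]
  obtain ⟨i₅, p, q, hpq⟩ := epx_eq X h1
  refine ⟨i₅, X.X.map p ≫ h, by rw [← epx_pred X p h, hh], q, ?_⟩
  rw [Category.assoc, ← hpq]

include ht in
theorem MKey.cofiltered : IsCofiltered (MKey X Y t) := by
  have hne : Nonempty (MKey X Y t) :=
    ⟨mkOver X Y t (IsCofiltered.nonempty (C := Y.I)).some⟩
  refine { cone_objs := ?_, cone_maps := ?_, nonempty := hne }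
  · intro k₁ k₂
    obtain ⟨i₅, g₂, hg₂, q₁, hsq₁⟩ :=
      MKey.jrefine ht k₁ (IsCofiltered.minToLeft k₁.j k₂.j)
    obtain ⟨i₆, g₃, hg₃, q₂, hsq₂⟩ :=
      MKey.jrefine ht k₂ (IsCofiltered.minToRight k₁.j k₂.j)
    obtain ⟨i₇, α, β, hαβ⟩ := epx_eq X (hg₂.trans hg₃.symm)
    refine ⟨⟨i₇, IsCofiltered.min k₁.j k₂.j, X.X.map α ≫ g₂, by
        rw [← epx_pred X α g₂, hg₂]⟩,
      ⟨(α ≫ q₁, IsCofiltered.minToLeft k₁.j k₂.j), ?_⟩,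
      ⟨(β ≫ q₂, IsCofiltered.minToRight k₁.j k₂.j), ?_⟩, trivial⟩
    · show (X.X.map α ≫ g₂) ≫ Y.X.map (IsCofiltered.minToLeft k₁.j k₂.j) =
        X.X.map (α ≫ q₁) ≫ k₁.g
      rw [Category.assoc, hsq₁, X.X.map_comp, Category.assoc]
    · show (X.X.map α ≫ g₂) ≫ Y.X.map (IsCofiltered.minToRight k₁.j k₂.j) =
        X.X.map (β ≫ q₂) ≫ k₂.g
      rw [hαβ, Category.assoc, hsq₂, X.X.map_comp, Category.assoc]
  · intro k₁ k₂ m m'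
    obtain ⟨⟨a, b⟩, hm⟩ := m
    obtain ⟨⟨a', b'⟩, hm'⟩ := m'
    obtain ⟨i₅, g₂, hg₂, q, hq⟩ := MKey.jrefine ht k₁ (IsCofiltered.eqHom b b')
    let r : IsCofiltered.min i₅ (IsCofiltered.eq a a') ⟶ i₅ :=
      IsCofiltered.minToLeft _ _
    let s : IsCofiltered.min i₅ (IsCofiltered.eq a a') ⟶ IsCofiltered.eq a a' :=
      IsCofiltered.minToRight _ _
    let e : IsCofiltered.eq a a' ⟶ k₁.i := IsCofiltered.eqHom a a'
    let w := IsCofiltered.eqHom (r ≫ q) (s ≫ e)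
    have hw : w ≫ (r ≫ q) = w ≫ (s ≫ e) := IsCofiltered.eq_condition _ _
    refine ⟨⟨IsCofiltered.eq (r ≫ q) (s ≫ e), IsCofiltered.eq b b',
        X.X.map (w ≫ r) ≫ g₂, by rw [← epx_pred X (w ≫ r) g₂, hg₂]⟩,
      ⟨((w ≫ r) ≫ q, IsCofiltered.eqHom b b'), ?_⟩, ?_⟩
    · show (X.X.map (w ≫ r) ≫ g₂) ≫ Y.X.map (IsCofiltered.eqHom b b') =
        X.X.map ((w ≫ r) ≫ q) ≫ k₁.g
      simp only [Functor.map_comp, Category.assoc]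
      rw [hq]
    · apply Subtype.ext
      apply Prod.ext
      · show ((w ≫ r) ≫ q) ≫ a = ((w ≫ r) ≫ q) ≫ a'
        have h1 : (w ≫ r) ≫ q = (w ≫ s) ≫ e := by
          rw [Category.assoc, Category.assoc]; exact hw
        rw [h1]
        simp only [Category.assoc]
        rw [IsCofiltered.eq_condition a a']
      · show IsCofiltered.eqHom b b' ≫ b = IsCofiltered.eqHom b b' ≫ b'
        exact IsCofiltered.eq_condition b b'

include ht in
theorem PI_initial : (PIfun X Y t).Initial := by
  haveI := MKey.cofiltered ht
  apply Functor.initial_of_exists_of_isCofiltered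
  · intro i
    obtain ⟨k₀⟩ := (MKey.cofiltered ht).nonempty
    refine ⟨⟨IsCofiltered.min i k₀.i, k₀.j,
      X.X.map (IsCofiltered.minToRight i k₀.i) ≫ k₀.g, by
        rw [← epx_pred X (IsCofiltered.minToRight i k₀.i) k₀.g, k₀.hg]⟩,
      ⟨IsCofiltered.minToLeft i k₀.i⟩⟩
  · intro i k s s'
    refine ⟨⟨IsCofiltered.eq s s', k.j, X.X.map (IsCofiltered.eqHom s s') ≫ k.g, by
        rw [← epx_pred X (IsCofiltered.eqHom s s') k.g]; exact k.hg⟩,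
      ⟨(IsCofiltered.eqHom s s', 𝟙 k.j), by simp; rfl⟩, ?_⟩
    show IsCofiltered.eqHom s s' ≫ s = IsCofiltered.eqHom s s' ≫ s'
    exact IsCofiltered.eq_condition s s'

include ht in
theorem PJ_initial : (PJfun X Y t).Initial := by
  haveI := MKey.cofiltered ht
  apply Functor.initial_of_exists_of_isCofiltered
  · intro j
    exact ⟨mkOver X Y t j, ⟨𝟙 j⟩⟩
  · intro j k s s'
    obtain ⟨i₅, g₂, hg₂, q, hq⟩ := MKey.jrefine ht k (IsCofiltered.eqHom s s')
    refine ⟨⟨i₅, IsCofiltered.eq s s', g₂, hg₂⟩, ⟨(q, IsCofiltered.eqHom s s'), hq⟩, ?_⟩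
    show IsCofiltered.eqHom s s' ≫ s = IsCofiltered.eqHom s s' ≫ s'
    exact IsCofiltered.eq_condition s s'

theorem ProHom.ext' {X Y : ProObj C} {f g : X ⟶ Y} (h : f.nt = g.nt) : f = g := by
  cases f using ProHom.casesOn; cases g using ProHom.casesOn; cases h; rfl

theorem meyerF_essSurj : (meyerF (C := C)).EssSurj := by
  constructor
  intro A
  let t : ∀ j : A.right.I, (proEmbed A.left).obj (A.right.X.obj j) :=
    fun j => tau A.hom j
  have ht : ∀ {j j' : A.right.I} (v : j ⟶ j'),
      (proEmbed A.left).map (A.right.X.map v) (t j) = t j' := fun v => tau_compat A.hom v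
  haveI hcof : IsCofiltered (MKey A.left A.right t) := MKey.cofiltered ht
  haveI hPI : (PIfun A.left A.right t).Initial := PI_initial ht
  haveI hPJ : (PJfun A.left A.right t).Initial := PJ_initial ht
  let W : ProObj (Arrow C) := ⟨MKey A.left A.right t, DKey A.left A.right t⟩
  let cL : proEmbed (LP W) ≅ proEmbed A.left :=
    Functor.Final.colimitIso (PIfun A.left A.right t).op (A.left.X.op ⋙ coyoneda)
  let cR : proEmbed (RP W) ≅ proEmbed A.right :=
    Functor.Final.colimitIso (PJfun A.left A.right t).op (A.right.X.op ⋙ coyoneda)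
  have cL_epx : ∀ (k : MKey A.left A.right t) (c : C) (w : A.left.X.obj k.i ⟶ c),
      cL.hom.app c (epx (LP W) k w) = epx A.left k.i w := by
    intro k c w
    exact ConcreteCategory.congr_hom (congrArg (fun nt => NatTrans.app nt c)
      (colimit.ι_pre (A.left.X.op ⋙ coyoneda) (PIfun A.left A.right t).op (op k))) w
  have cR_epx : ∀ (k : MKey A.left A.right t) (c : C) (w : A.right.X.obj k.j ⟶ c),
      cR.hom.app c (epx (RP W) k w) = epx A.right k.j w := by
    intro k c w
    exact ConcreteCategory.congr_hom (congrArg (fun nt => NatTrans.app nt c)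
      (colimit.ι_pre (A.right.X.op ⋙ coyoneda) (PJfun A.left A.right t).op (op k))) w
  have cL_inv_epx : ∀ (k : MKey A.left A.right t) (c : C) (w : A.left.X.obj k.i ⟶ c),
      cL.inv.app c (epx A.left k.i w) = epx (LP W) k w := by
    intro k c w
    rw [← cL_epx k c w]
    exact ConcreteCategory.congr_hom (congrArg (fun nt => NatTrans.app nt c) cL.hom_inv_id) (epx (LP W) k w)
  have cR_inv_epx : ∀ (k : MKey A.left A.right t) (c : C) (w : A.right.X.obj k.j ⟶ c),
      cR.inv.app c (epx A.right k.j w) = epx (RP W) k w := by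
    intro k c w
    rw [← cR_epx k c w]
    exact ConcreteCategory.congr_hom (congrArg (fun nt => NatTrans.app nt c) cR.hom_inv_id) (epx (RP W) k w)
  let isoL : LP W ≅ A.left :=
    { hom := ⟨cL.inv⟩
      inv := ⟨cL.hom⟩
      hom_inv_id := congrArg ProHom.mk cL.hom_inv_id
      inv_hom_id := congrArg ProHom.mk cL.inv_hom_id }
  let isoR : RP W ≅ A.right :=
    { hom := ⟨cR.inv⟩
      inv := ⟨cR.hom⟩
      hom_inv_id := congrArg ProHom.mk cR.hom_inv_id
      inv_hom_id := congrArg ProHom.mk cR.inv_hom_id }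
  have wsq : isoL.hom ≫ A.hom = phi W ≫ isoR.hom := by
    have key : ∀ (k : MKey A.left A.right t) (c : C) (u : A.right.X.obj k.j ⟶ c),
        (isoL.hom ≫ A.hom).nt.app c (epx A.right k.j u) =
        (phi W ≫ isoR.hom).nt.app c (epx A.right k.j u) := by
      intro k c u
      have lhs1 : (isoL.hom ≫ A.hom).nt.app c (epx A.right k.j u) =
          cL.inv.app c (A.hom.nt.app c (epx A.right k.j u)) := rfl
      have rhs1 : (phi W ≫ isoR.hom).nt.app c (epx A.right k.j u) =
          (phi W).nt.app c (cR.inv.app c (epx A.right k.j u)) := rfl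
      have lhs2 : A.hom.nt.app c (epx A.right k.j u) =
          (proEmbed A.left).map u (tau A.hom k.j) := nt_epx A.hom k.j u
      rw [lhs1, rhs1, lhs2]
      have h2 : tau A.hom k.j = epx A.left k.i k.g := k.hg.symm
      rw [h2, epx_map, cL_inv_epx k c (k.g ≫ u), cR_inv_epx k c u]
      have h3 : (phi W).nt.app c (epx (RP W) k u) =
          (proEmbed (LP W)).map u (epx (LP W) k (W.X.obj k).hom) := phi_epx W k u
      rw [h3]
      erw [epx_map]
      rfl
    apply ProHom.ext'
    ext c x
    obtain ⟨j, u, rfl⟩ := epx_surjective A.right x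
    exact key (mkOver A.left A.right t j) c u
  exact ⟨W, ⟨Arrow.isoMk isoL isoR wsq⟩⟩


/-- Meyer's theorem: the obvious functor `pro-(Map C) ⟶ Map(pro-C)`, sending a
cofiltering diagram of arrows to the arrow between the pro-objects of domains and of
codomains, is fully faithful and essentially surjective; hence the categories
`pro-(Map C)` and `Map(pro-C)` are equivalent. -/
theorem pro_arrow_equivalence :
    ∃ F : ProObj (Arrow C) ⥤ Arrow (ProObj C),
      (∀ W : ProObj (Arrow C),
        (F.obj W).left = ProObj.mk W.I (W.X ⋙ Arrow.leftFunc) ∧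
        (F.obj W).right = ProObj.mk W.I (W.X ⋙ Arrow.rightFunc)) ∧
      F.Full ∧ F.Faithful ∧ F.EssSurj :=
  ⟨meyerF, fun W => ⟨rfl, rfl⟩, meyerF_full, meyerF_faithful, meyerF_essSurj⟩
end

section
/- Let C be a category. For every pro-object X in pro-C there exists a pro-object M(X) indexed by a cofinite strongly directed set together with an isomorphism M(X) ≅ X in pro-C; moreover M can be chosen functorially in X with the isomorphisms natural (the Mardešić reindexing theorem). -/
open CategoryTheory CategoryTheory.Limits Opposite

universe v u

variable {C : Type u} [Category.{v} C]

/-- The index category of a pro-object is (the category associated to) a cofinite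
strongly directed set: morphism sets are subsingletons (a thin category), any two
antiparallel morphisms force equality of objects (strong directedness, i.e. it is a
poset rather than a preorder), and every object admits only finitely many strict
predecessors (an object `b ≠ a` is a predecessor of `a` if there is a map `a ⟶ b`,
since a cofiltering category corresponds to the opposite of a directed order). -/
def HasCofiniteStronglyDirectedIndex (X : ProObj C) : Prop :=
  (∀ a b : X.I, Subsingleton (a ⟶ b)) ∧
  (∀ a b : X.I, (a ⟶ b) → (b ⟶ a) → a = b) ∧
  (∀ a : X.I, {b : X.I | b ≠ a ∧ Nonempty (a ⟶ b)}.Finite)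

namespace Mardesic

variable (X : ProObj C)

/-- Base type: morphisms of `X.I` plus formal padding. -/
abbrev B : Type v := (Σ a : X.I, Σ b : X.I, a ⟶ b) ⊕ ULift.{v} ℕ

/-- objects occurring as endpoints of (genuine) morphisms in `S` -/
def objsIn (S : Set (B X)) : Set X.I :=
  {j | ∃ s : Σ a : X.I, Σ b : X.I, a ⟶ b,
     Sum.inl s ∈ S ∧ (s.1 = j ∨ s.2.1 = j)}

lemma mem_objsIn_left {S : Set (B X)} {a b : X.I} {h : a ⟶ b}
    (hm : Sum.inl ⟨a, b, h⟩ ∈ S) : a ∈ objsIn X S :=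
  ⟨⟨a, b, h⟩, hm, Or.inl rfl⟩

lemma mem_objsIn_right {S : Set (B X)} {a b : X.I} {h : a ⟶ b}
    (hm : Sum.inl ⟨a, b, h⟩ ∈ S) : b ∈ objsIn X S :=
  ⟨⟨a, b, h⟩, hm, Or.inr rfl⟩

lemma objsIn_mono {S T : Set (B X)} (h : S ⊆ T) : objsIn X S ⊆ objsIn X T := by
  rintro j ⟨s, hs, hj⟩
  exact ⟨s, h hs, hj⟩

lemma objsIn_finite {S : Set (B X)} (h : S.Finite) : (objsIn X S).Finite := by
  have h' : ((Sum.inl : _ → B X) ⁻¹' S).Finite :=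
    h.preimage Sum.inl_injective.injOn
  apply Set.Finite.subset ((h'.image (fun s => s.1)).union (h'.image fun s => s.2.1))
  rintro j ⟨s, hs, rfl | rfl⟩
  · exact Or.inl ⟨s, hs, rfl⟩
  · exact Or.inr ⟨s, hs, rfl⟩

/-- Points of the new index poset: a finite (padded) set of morphisms of `X.I`
together with a cone over it. -/
structure Pt : Type v where
  S : Set (B X)
  fin : S.Finite
  ne : (objsIn X S).Nonempty
  c : X.I
  f : ∀ j, j ∈ objsIn X S → (c ⟶ j)
  compat : ∀ (a b : X.I) (h : a ⟶ b) (hm : Sum.inl ⟨a, b, h⟩ ∈ S),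
    f a (mem_objsIn_left X hm) ≫ h = f b (mem_objsIn_right X hm)

variable {X}

def legs (p : Pt X) : Set (B X) :=
  {y | ∃ j hj, Sum.inl ⟨p.c, j, p.f j hj⟩ = y}

lemma legs_finite (p : Pt X) : (legs p).Finite :=
  (objsIn_finite X p.fin).dependent_image _

lemma c_mem {p q : Pt X} (h : legs q ⊆ p.S) : q.c ∈ objsIn X p.S := by
  obtain ⟨j, hj⟩ := q.ne
  exact mem_objsIn_left X (h ⟨j, hj, rfl⟩)

/-- the refinement relation -/
def sq (p q : Pt X) : Prop := p = q ∨ (p.S ∪ legs p ⊆ q.S ∧ p.S ≠ q.S)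

lemma sq_trans {a b c : Pt X} : sq a b → sq b c → sq a c := by
  rintro (rfl | ⟨hab, nab⟩) h
  · exact h
  · rcases h with rfl | ⟨hbc, nbc⟩
    · exact Or.inr ⟨hab, nab⟩
    · refine Or.inr ⟨fun x hx => hbc (Or.inl (hab hx)), fun hac => nbc ?_⟩
      have h1 : b.S ⊆ c.S := fun x hx => hbc (Or.inl hx)
      have h2 : a.S ⊆ b.S := fun x hx => hab (Or.inl hx)
      exact le_antisymm h1 (hac ▸ h2)

lemma sq_antisymm {a b : Pt X} (h1 : sq a b) (h2 : sq b a) : a = b := by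
  rcases h1 with rfl | ⟨hab, nab⟩
  · rfl
  · rcases h2 with h | ⟨hba, _⟩
    · exact h.symm
    · exact absurd (le_antisymm (fun x hx => hab (Or.inl hx))
        (fun x hx => hba (Or.inl hx))) nab

instance : PartialOrder (Pt X) where
  le p q := sq q p
  le_refl p := Or.inl rfl
  le_trans p q r hpq hqr := sq_trans hqr hpq
  le_antisymm p q hpq hqp := (sq_antisymm hpq hqp).symm

lemma le_def {p q : Pt X} : p ≤ q ↔ sq q p := Iff.rfl

variable (X)

/-- a basic point concentrated at a single object -/
noncomputable def single (i : X.I) : Pt X where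
  S := {Sum.inl ⟨i, i, 𝟙 i⟩}
  fin := Set.finite_singleton _
  ne := ⟨i, ⟨i, i, 𝟙 i⟩, Set.mem_singleton _, Or.inl rfl⟩
  c := i
  f := fun j hj => by
    refine eqToHom ?_
    obtain ⟨s, hs, h⟩ := hj
    rw [Set.mem_singleton_iff] at hs
    have hs' := Sum.inl.inj hs
    subst hs'
    rcases h with rfl | rfl <;> rfl
  compat := by
    intro a b h hm
    rw [Set.mem_singleton_iff] at hm
    have hm' := Sum.inl.inj hm
    injection hm' with ha hrest
    subst ha
    have hrest' := eq_of_heq hrest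
    injection hrest' with hb hg
    subst hb
    have hg' := eq_of_heq hg
    subst hg'
    simp

@[simp] lemma single_c (i : X.I) : (single X i).c = i := rfl

variable {X}

/-- The key construction: any point can be refined so that its set includes any
prescribed finite set, strictly. -/
lemma exists_upper (p : Pt X) (T : Set (B X)) (hT : T.Finite) :
    ∃ r : Pt X, (p.S ∪ legs p ∪ T ⊆ r.S) ∧
      ∀ W ⊆ p.S ∪ legs p ∪ T, W ≠ r.S := by
  classical
  set D : Set (B X) := p.S ∪ legs p ∪ T with hD
  have hDfin : D.Finite := (p.fin.union (legs_finite p)).union hT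
  -- a fresh padding element
  have hpadfin : ((fun n : ℕ => (Sum.inr (ULift.up n) : B X)) ⁻¹' D).Finite :=
    hDfin.preimage (Function.Injective.injOn (by
      intro m n h
      simpa using h))
  obtain ⟨m, hm⟩ := hpadfin.bddAbove
  set pad : B X := Sum.inr (ULift.up (m + 1)) with hpadd
  have hpad : pad ∉ D := by
    intro hmem
    have : m + 1 ≤ m := hm hmem
    omega
  -- build a cone over D using cofilteredness of X.I
  have hObj : (objsIn X D).Finite := objsIn_finite X hDfin
  set O : Finset X.I := hObj.toFinset with hO
  set Hs : Set (Σ' (a b : X.I) (_ : a ∈ O) (_ : b ∈ O), a ⟶ b) :=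
    {t | Sum.inl ⟨t.1, t.2.1, t.2.2.2.2⟩ ∈ D} with hHs
  have hHsfin : Hs.Finite := by
    apply Set.Finite.of_finite_image
      (f := fun t => (Sum.inl ⟨t.1, t.2.1, t.2.2.2.2⟩ : B X))
    · exact hDfin.subset (by rintro x ⟨t, ht, rfl⟩; exact ht)
    · rintro ⟨a, b, ma, mb, g⟩ _ ⟨a', b', ma', mb', g'⟩ _ h
      have h1 := Sum.inl.inj h
      injection h1 with ha hrest
      subst ha
      have hrest' := eq_of_heq hrest
      injection hrest' with hb hg
      subst hb
      have hg' := eq_of_heq hg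
      subst hg'
      rfl
  obtain ⟨e, k, hk⟩ := IsCofiltered.inf_exists O hHsfin.toFinset
  have hinsObj : objsIn X (insert pad D) = objsIn X D := by
    apply Set.Subset.antisymm
    · rintro j ⟨s, hs, hj⟩
      rcases hs with hs | hs
      · exact absurd hs (by simp [hpadd])
      · exact ⟨s, hs, hj⟩
    · exact objsIn_mono X (Set.subset_insert _ _)
  have memO : ∀ {j}, j ∈ objsIn X D → j ∈ O := fun hj => hObj.mem_toFinset.mpr hj
  refine ⟨{ S := insert pad D
            fin := hDfin.insert pad
            ne := by
              rw [hinsObj]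
              obtain ⟨j, hj⟩ := p.ne
              exact ⟨j, objsIn_mono X (fun x hx => Or.inl (Or.inl hx)) hj⟩
            c := e
            f := fun j hj => k (memO (hinsObj ▸ hj))
            compat := by
              intro a b h hm
              rcases hm with hm | hm
              · exact absurd hm (by simp [hpadd])
              · refine hk (memO (mem_objsIn_left X hm)) (memO (mem_objsIn_right X hm)) ?_
                rw [Set.Finite.mem_toFinset]
                exact hm }, ?_, ?_⟩
  · exact fun x hx => Or.inr hx
  · intro W hW hWeq
    exact hpad (hW (hWeq ▸ (Or.inl rfl : pad ∈ insert pad D)))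

instance : Nonempty (Pt X) := by
  have h : Nonempty X.I := IsCofiltered.nonempty
  exact ⟨single X h.some⟩

instance : IsDirected (Pt X) (· ≥ ·) := by
  constructor
  intro p q
  obtain ⟨r, hsub, hne⟩ := exists_upper p (q.S ∪ legs q) (q.fin.union (legs_finite q))
  refine ⟨r, ?_, ?_⟩
  · exact Or.inr ⟨fun x hx => hsub (Or.inl hx),
      hne p.S (fun x hx => Or.inl (Or.inl hx))⟩
  · exact Or.inr ⟨fun x hx => hsub (Or.inr hx),
      hne q.S (fun x hx => Or.inr (Or.inl hx))⟩

instance : IsCofiltered (Pt X) := inferInstance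

open Classical in
/-- the canonical map attached to a refinement -/
noncomputable def Umap {p q : Pt X} (h : sq q p) : p.c ⟶ q.c :=
  if e : q = p then eqToHom (congrArg Pt.c e).symm
  else p.f q.c (c_mem (fun x hx => (h.resolve_left e).1 (Or.inr hx)))

lemma Umap_pos {p q : Pt X} (h : sq q p) (e : q = p) :
    Umap h = eqToHom (congrArg Pt.c e).symm := by
  unfold Umap
  exact dif_pos e

lemma Umap_neg {p q : Pt X} (h : sq q p) (e : ¬ q = p) :
    Umap h = p.f q.c (c_mem (fun x hx => (h.resolve_left e).1 (Or.inr hx))) := by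
  unfold Umap
  exact dif_neg e

lemma Umap_comp {p q r : Pt X} (h1 : sq r q) (h2 : sq q p) :
    Umap (sq_trans h1 h2) = Umap h2 ≫ Umap h1 := by
  by_cases e1 : r = q
  · subst e1
    by_cases e2 : r = p
    · subst e2
      rw [Umap_pos (sq_trans h1 h2) rfl]
      simp
    · rw [Umap_pos h1 rfl, Umap_neg (sq_trans h1 h2) e2]
      simp
  · by_cases e2 : q = p
    · subst e2
      rw [Umap_pos h2 rfl, Umap_neg (sq_trans h1 h2) e1]
      simp
    · have e3 : r ≠ p := by
        intro h
        subst h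
        exact e1 (sq_antisymm h1 h2)
      have hrq := h1.resolve_left e1
      have hqp := h2.resolve_left e2
      rw [Umap_neg (sq_trans h1 h2) e3]
      rw [Umap_neg h2 e2]
      rw [Umap_neg h1 e1]
      have hm : Sum.inl ⟨q.c, r.c, q.f r.c (c_mem (fun x hx => hrq.1 (Or.inr hx)))⟩
          ∈ p.S := hqp.1 (Or.inr ⟨r.c, _, rfl⟩)
      exact (p.compat q.c r.c _ hm).symm

variable (X)

/-- the reindexing functor -/
noncomputable def U : Pt X ⥤ X.I where
  obj p := p.c
  map {p q} φ := Umap (leOfHom φ)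
  map_id p := by
    show Umap (leOfHom (𝟙 p)) = 𝟙 p.c
    rw [Umap_pos (leOfHom (𝟙 p)) rfl]
    simp
  map_comp {p q r} φ ψ := Umap_comp (leOfHom ψ) (leOfHom φ)

instance : (U X).Initial := by
  apply Functor.initial_of_exists_of_isCofiltered
  · intro d
    exact ⟨single X d, ⟨𝟙 d⟩⟩
  · intro d p s s'
    obtain ⟨r, hsub, hne⟩ := exists_upper p
      ({Sum.inl ⟨p.c, d, s⟩, Sum.inl ⟨p.c, d, s'⟩} : Set (B X))
      ((Set.finite_singleton _).insert _)
    have hle : r ≤ p := Or.inr ⟨fun x hx => hsub (Or.inl hx),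
      hne p.S (fun x hx => Or.inl (Or.inl hx))⟩
    have hrp : p ≠ r := by
      intro h
      exact hne p.S (fun x hx => Or.inl (Or.inl hx)) (congrArg Pt.S h)
    refine ⟨r, homOfLE hle, ?_⟩
    have hle' : sq p r := hle
    have hmap : (U X).map (homOfLE hle) =
        r.f p.c (c_mem (fun x hx => (hle'.resolve_left hrp).1 (Or.inr hx))) :=
      Umap_neg (leOfHom (homOfLE hle)) hrp
    have hs : Sum.inl ⟨p.c, d, s⟩ ∈ r.S := hsub (Or.inr (Or.inl rfl))
    have hs' : Sum.inl ⟨p.c, d, s'⟩ ∈ r.S := hsub (Or.inr (Or.inr rfl))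
    rw [hmap]
    have c1 := r.compat p.c d s hs
    have c2 := r.compat p.c d s' hs'
    exact c1.trans c2.symm

variable {X}

lemma pt_ext {b b' : Pt X} (hS : b.S = b'.S) (hL : legs b = legs b') : b = b' := by
  obtain ⟨j0, hj0⟩ := b.ne
  have hmem : (Sum.inl ⟨b.c, j0, b.f j0 hj0⟩ : B X) ∈ legs b' := by
    rw [← hL]
    exact ⟨j0, hj0, rfl⟩
  obtain ⟨j1, hj1, he⟩ := hmem
  have hc : b'.c = b.c := congrArg Sigma.fst (Sum.inl.inj he)
  have hcf : ∀ j (hj : j ∈ objsIn X b.S), ∃ (hj' : j ∈ objsIn X b'.S),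
      (Sum.inl ⟨b'.c, j, b'.f j hj'⟩ : B X) = Sum.inl ⟨b.c, j, b.f j hj⟩ := by
    intro j hj
    have hmem2 : (Sum.inl ⟨b.c, j, b.f j hj⟩ : B X) ∈ legs b' := by
      rw [← hL]
      exact ⟨j, hj, rfl⟩
    obtain ⟨j2, hj2, he2⟩ := hmem2
    have hj2j : j2 = j := congrArg (fun s : Σ a : X.I, Σ c : X.I, a ⟶ c => s.2.1)
      (Sum.inl.inj he2)
    subst hj2j
    exact ⟨hj2, he2⟩
  obtain ⟨S, fin, ne, c, f, compat⟩ := b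
  obtain ⟨S', fin', ne', c', f', compat'⟩ := b'
  dsimp at hS hc hcf
  subst hS
  subst hc
  have hf : f = f' := by
    funext j hj
    obtain ⟨hj', he2⟩ := hcf j hj
    have h3 := Sum.inl.inj he2
    injection h3 with h4 hrest
    injection hrest with h5 hg
    exact hg.symm
  subst hf
  rfl

lemma big_finite (a : Pt X) : {b : Pt X | b.S ∪ legs b ⊆ a.S}.Finite := by
  classical
  apply Set.Finite.of_finite_image (f := fun b : Pt X => (b.S, legs b))
  · apply Set.Finite.subset ((a.fin.finite_subsets).prod (a.fin.finite_subsets))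
    rintro x ⟨b, hb, rfl⟩
    exact ⟨fun y hy => hb (Or.inl hy), fun y hy => hb (Or.inr hy)⟩
  · intro b _ b' _ heq
    exact pt_ext (congrArg Prod.fst heq) (congrArg Prod.snd heq)

end Mardesic

namespace Mardesic

/-- the reindexed pro-object -/
noncomputable def Mobj (X : ProObj C) : ProObj C := ⟨Pt X, U X ⋙ X.X⟩

/-- the comparison isomorphism on co-presheaves -/
noncomputable def eIso (X : ProObj C) : proEmbed (Mobj X) ≅ proEmbed X :=
  Functor.Final.colimitIso (U X).op (X.X.op ⋙ coyoneda)

/-- The Mardešić reindexing functor. -/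
noncomputable def M : ProObj C ⥤ ProObj C where
  obj := Mobj
  map {X Y} f := ⟨(eIso Y).hom ≫ f.nt ≫ (eIso X).inv⟩
  map_id X := by
    refine congrArg ProHom.mk ?_
    have h : (𝟙 X : X ⟶ X).nt = 𝟙 (proEmbed X) := rfl
    rw [h]
    simp
  map_comp {X Y Z} f g := by
    refine congrArg ProHom.mk ?_
    have h : (f ≫ g).nt = g.nt ≫ f.nt := rfl
    rw [h]
    simp

/-- naturally isomorphic to the identity -/
noncomputable def MIso : (M : ProObj C ⥤ ProObj C) ≅ 𝟭 (ProObj C) :=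
  NatIso.ofComponents
    (fun X =>
      { hom := ⟨(eIso X).inv⟩
        inv := ⟨(eIso X).hom⟩
        hom_inv_id := congrArg ProHom.mk (by exact (eIso X).hom_inv_id)
        inv_hom_id := congrArg ProHom.mk (by exact (eIso X).inv_hom_id) })
    (fun {X Y} f => congrArg ProHom.mk (by
      have h : (M.map f).nt = (eIso Y).hom ≫ f.nt ≫ (eIso X).inv := rfl
      rw [h]
      exact (eIso Y).inv_hom_id_assoc _))

end Mardesic

lemma hcsdi (X : ProObj C) :
    (∀ a b : Mardesic.Pt X, Subsingleton (a ⟶ b)) ∧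
    (∀ a b : Mardesic.Pt X, (a ⟶ b) → (b ⟶ a) → a = b) ∧
    (∀ a : Mardesic.Pt X, {b : Mardesic.Pt X | b ≠ a ∧ Nonempty (a ⟶ b)}.Finite) := by
  refine ⟨fun a b => inferInstance,
    fun a b g h => le_antisymm (leOfHom g) (leOfHom h), ?_⟩
  intro a
  apply Set.Finite.subset (Mardesic.big_finite a)
  rintro b ⟨hne, ⟨g⟩⟩
  have h : Mardesic.sq b a := leOfHom g
  exact (h.resolve_left hne).1


/-- The Mardešić reindexing theorem: there is a functor `M : pro-C ⥤ pro-C`, naturally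
isomorphic to the identity, such that every `M(X)` is indexed by a cofinite strongly
directed set. -/
theorem mardesic_reindexing :
    ∃ (M : ProObj C ⥤ ProObj C) (_ : M ≅ 𝟭 (ProObj C)),
      ∀ X : ProObj C, HasCofiniteStronglyDirectedIndex (M.obj X) := by
  exact ⟨Mardesic.M, Mardesic.MIso, fun X => hcsdi X⟩
end

section
/- Let C be a category, X : I → C and Y : K → C pro-objects with I, K directed sets, and suppose K is cofinite and strongly directed. Then every pro-morphism f : X → Y admits a strict representative: an order-preserving function θ : K → I and maps f_k : X_{θ(k)} → Y_k such that for all k ≤ k', b_{k',k} ∘ f_{k'} = f_k ∘ b_{θ(k'),θ(k)}, representing f. -/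
open CategoryTheory CategoryTheory.Limits Opposite

universe v u

variable {C : Type u} [Category.{v} C]
variable {J K : Type v} [PartialOrder J] [PartialOrder K]

/-- The diagram `j ↦ Hom_C(X_j, Y_k)` (for a fixed index `k`), whose colimit over the
directed set `J` is `colim_j Hom_C(X_j, Y_k)`. -/
noncomputable def homDiagramAt (X : Jᵒᵖ ⥤ C) (Y : Kᵒᵖ ⥤ C) (k : K) : J ⥤ Type v :=
  ((Functor.whiskeringLeft J Cᵒᵖ (Type v)).obj X.rightOp).obj (yoneda.obj (Y.obj (op k)))

/-- The diagram `k ↦ colim_j Hom_C(X_j, Y_k)`, whose limit is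
`Hom_{pro-C}(X, Y) = lim_k colim_j Hom_C(X_j, Y_k)`. -/
noncomputable def homDiagram (X : Jᵒᵖ ⥤ C) (Y : Kᵒᵖ ⥤ C) : Kᵒᵖ ⥤ Type v :=
  Y ⋙ yoneda ⋙ (Functor.whiskeringLeft J Cᵒᵖ (Type v)).obj X.rightOp ⋙ colim

/-- `Hom_{pro-C}(X, Y) = lim_k colim_j Hom_C(X_j, Y_k)`. -/
noncomputable def proHom (X : Jᵒᵖ ⥤ C) (Y : Kᵒᵖ ⥤ C) : Type v :=
  limit (homDiagram X Y)

/-- A representative of a pro-morphism `X ⟶ Y`: a function `θ : K → J` (not necessarily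
order-preserving) and maps `f_k : X_{θ(k)} ⟶ Y_k`, such that for `k ≤ k'` some common
refinement `j ≥ θ(k), θ(k')` makes the evident square with the bonding maps commute. -/
structure ProRep (X : Jᵒᵖ ⥤ C) (Y : Kᵒᵖ ⥤ C) : Type (max u v) where
  /-- the index function -/
  θ : K → J
  /-- the components -/
  app : ∀ k : K, X.obj (op (θ k)) ⟶ Y.obj (op k)
  compat : ∀ (k k' : K) (h : k ≤ k'), ∃ (j : J) (h1 : θ k ≤ j) (h2 : θ k' ≤ j),
    X.map (homOfLE h2).op ≫ app k' ≫ Y.map (homOfLE h).op =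
      X.map (homOfLE h1).op ≫ app k

-- Auxiliary machinery for the strict reindexing argument.
lemma aux_wf (hK : ∀ k : K, {k' : K | k' < k}.Finite) :
    WellFounded ((· < ·) : K → K → Prop) := by
  constructor
  intro k
  have H : ∀ n k, (hK k).toFinset.card = n → Acc (· < ·) k := by
    intro n
    induction n using Nat.strong_induction_on with
    | _ n ih =>
      intro k hn
      constructor
      intro k' hk'
      refine ih (hK k').toFinset.card ?_ k' rfl
      rw [← hn]
      apply Finset.card_lt_card
      rw [Finset.ssubset_iff_of_subset]
      · exact ⟨k', by simpa using hk', by simp⟩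
      · intro x hx
        simp only [Set.Finite.mem_toFinset, Set.mem_setOf_eq] at hx ⊢
        exact hx.trans hk'
  exact H _ k rfl

lemma homDiagram_map_ι (X : Jᵒᵖ ⥤ C) (Y : Kᵒᵖ ⥤ C) {k k' : K} (h : k' ≤ k) (j : J)
    (φ : X.obj (op j) ⟶ Y.obj (op k)) :
    (homDiagram X Y).map (homOfLE h).op (colimit.ι (homDiagramAt X Y k) j φ) =
      colimit.ι (homDiagramAt X Y k') j (φ ≫ Y.map (homOfLE h).op) := by
  dsimp [homDiagram, homDiagramAt]
  exact ConcreteCategory.congr_hom (ι_colimMap (Functor.whiskerLeft X.rightOp (yoneda.map (Y.map (homOfLE h).op))) j) φ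

/-- Raw data of a representative at index `k`. -/
structure RepAt (X : Jᵒᵖ ⥤ C) (Y : Kᵒᵖ ⥤ C) (f : proHom X Y) (k : K) : Type v where
  j : J
  φ : X.obj (op j) ⟶ Y.obj (op k)
  rep : limit.π (homDiagram X Y) (op k) f = colimit.ι (homDiagramAt X Y k) j φ

lemma step [Nonempty J] [IsDirected J (· ≤ ·)]
    (X : Jᵒᵖ ⥤ C) (Y : Kᵒᵖ ⥤ C) (f : proHom X Y) (k : K)
    (hKk : {k' : K | k' < k}.Finite)
    (prev : ∀ k', k' < k → RepAt X Y f k') :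
    ∃ d : RepAt X Y f k, ∀ k' (h : k' < k), ∃ (hj : (prev k' h).j ≤ d.j),
      d.φ ≫ Y.map (homOfLE h.le).op =
        X.map (homOfLE hj).op ≫ (prev k' h).φ := by
  classical
  obtain ⟨j₀, (φ₀ : X.obj (op j₀) ⟶ Y.obj (op k)), hrep⟩ := Types.jointly_surjective' (F := homDiagramAt X Y k)
    (limit.π (homDiagram X Y) (op k) f)
  have hsel : ∀ k' (h : k' < k), ∃ (l : J) (h1 : j₀ ≤ l) (h2 : (prev k' h).j ≤ l),
      X.map (homOfLE h1).op ≫ (φ₀ ≫ Y.map (homOfLE h.le).op) =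
        X.map (homOfLE h2).op ≫ (prev k' h).φ := by
    intro k' h
    have key : colimit.ι (homDiagramAt X Y k') j₀ (φ₀ ≫ Y.map (homOfLE h.le).op) =
        colimit.ι (homDiagramAt X Y k') (prev k' h).j (prev k' h).φ := by
      rw [← homDiagram_map_ι X Y h.le j₀ φ₀, hrep, ← (prev k' h).rep]
      exact limit.w_apply (homDiagram X Y) (homOfLE h.le).op f
    replace key := (Types.FilteredColimit.colimit_eq_iff (F := homDiagramAt X Y k')).1 key
    obtain ⟨l, f1, f2, he⟩ := key
    exact ⟨l, leOfHom f1, leOfHom f2, he⟩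
  choose l h1 h2 heq using hsel
  -- upper bound
  have hfin : ∃ M : J, j₀ ≤ M ∧ ∀ k' (h : k' < k), l k' h ≤ M := by
    have hex := Finset.exists_le
      (insert j₀ (hKk.toFinset.attach.image fun p =>
        l p.1 (hKk.mem_toFinset.mp p.2)))
    obtain ⟨M, hM⟩ := hex
    refine ⟨M, hM _ (Finset.mem_insert_self _ _), fun k' h => hM _ ?_⟩
    exact Finset.mem_insert_of_mem
      (Finset.mem_image.2 ⟨⟨k', hKk.mem_toFinset.mpr h⟩, Finset.mem_attach _ _, rfl⟩)
  obtain ⟨M, hj₀M, hlM⟩ := hfin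
  refine ⟨⟨M, X.map (homOfLE hj₀M).op ≫ φ₀, ?_⟩, ?_⟩
  · rw [← hrep]
    exact (colimit.w_apply (homDiagramAt X Y k) (homOfLE hj₀M) φ₀).symm
  · intro k' h
    refine ⟨(h2 k' h).trans (hlM k' h), ?_⟩
    have := congrArg (fun ψ => X.map (homOfLE (hlM k' h)).op ≫ ψ) (heq k' h)
    simp only [← Category.assoc, ← X.map_comp, ← op_comp, homOfLE_comp] at this ⊢
    simpa using this

/-- If `X` and `Y` are pro-objects indexed by directed sets and the indexing set `K` of
`Y` is cofinite (every element has finitely many predecessors) and strongly directed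
(a partial order), then every pro-morphism `f : X ⟶ Y` admits a strict representative:
an order-preserving `θ : K → I` together with maps `f_k : X_{θ(k)} ⟶ Y_k` forming a
natural transformation (`b_{k',k} ∘ f_{k'} = f_k ∘ b_{θ(k'),θ(k)}` for `k ≤ k'`) which
represents `f`. -/
theorem exists_strict_representative
    [Nonempty J] [IsDirected J (· ≤ ·)] [Nonempty K] [IsDirected K (· ≤ ·)]
    (hK : ∀ k : K, {k' : K | k' < k}.Finite)
    (X : Jᵒᵖ ⥤ C) (Y : Kᵒᵖ ⥤ C) (f : proHom X Y) :
    ∃ (θ : K → J) (_ : Monotone θ)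
      (g : ∀ k : K, X.obj (op (θ k)) ⟶ Y.obj (op k)),
      (∀ (k k' : K) (h : k ≤ k') (hθ : θ k ≤ θ k'),
        g k' ≫ Y.map (homOfLE h).op = X.map (homOfLE hθ).op ≫ g k) ∧
      (∀ k : K, limit.π (homDiagram X Y) (op k) f =
        colimit.ι (homDiagramAt X Y k) (θ k) (g k)) := by
  classical
  have wf := aux_wf hK
  let F : ∀ k : K, RepAt X Y f k :=
    wf.fix (fun k ih => (step X Y f k (hK k) ih).choose)
  have hF : ∀ k : K, F k = (step X Y f k (hK k) (fun k' _ => F k')).choose := fun k =>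
    wf.fix_eq _ k
  have compat : ∀ (k k' : K) (h : k' < k), ∃ (hj : (F k').j ≤ (F k).j),
      (F k).φ ≫ Y.map (homOfLE h.le).op = X.map (homOfLE hj).op ≫ (F k').φ := by
    intro k k' h
    have := (step X Y f k (hK k) (fun k' _ => F k')).choose_spec k' h
    rw [← hF k] at this
    exact this
  refine ⟨fun k => (F k).j, ?_, fun k => (F k).φ, ?_, fun k => (F k).rep⟩
  · intro k k' h
    rcases h.eq_or_lt with rfl | h
    · exact le_rfl
    · obtain ⟨hj, -⟩ := compat k' k h
      exact hj
  · intro k k' h hθ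
    rcases h.eq_or_lt with rfl | h
    · show (F k).φ ≫ Y.map (𝟙 (op k)) = X.map (𝟙 (op (F k).j)) ≫ (F k).φ
      simp
    · obtain ⟨hj, he⟩ := compat k' k h
      exact he
end

section
/- Let C be a cocomplete category, I a class of maps, κ a cardinal such that every domain of a map of I is κ-small relative to I-cof, and λ a κ-filtered ordinal. Let f : X → Y and let Z : λ → C be a λ-sequence with Z_0 = X, whose successor maps are pushouts of maps in I-cof, together with compatible maps ρ_β : Z_β → Y over Y such that for every β the factorization at stage β+1 satisfies the universal factoring property of condition (2) of the generalized small object argument. If a commutative square from a map l : C → D of I to ρ_λ : Z_λ → Y is given, then the top map C → Z_λ factors through some Z_β with β < λ, and the square admits a diagonal lift D → Z_λ. -/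
open CategoryTheory CategoryTheory.Limits

universe v u

variable {C : Type u} [Category.{v} C]

/-- `inj I`: maps with the right lifting property w.r.t. every map of `I`. -/
def inj (I : MorphismProperty C) : MorphismProperty C :=
  fun _ _ p => ∀ ⦃A B : C⦄ (i : A ⟶ B), I i → HasLiftingProperty i p

/-- `cof I`: maps with the left lifting property w.r.t. every map of `inj I`. -/
def cof (I : MorphismProperty C) : MorphismProperty C :=
  fun _ _ i => ∀ ⦃A B : C⦄ (p : A ⟶ B), inj I p → HasLiftingProperty i p

/-- A `κ`-filtered ordinal. -/
def kFiltered (κ : Cardinal.{v+1}) (l : Ordinal.{v}) : Prop :=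
  Order.IsSuccLimit l ∧ ∀ Λ : Set Ordinal.{v}, (∀ o ∈ Λ, o < l) → Cardinal.mk Λ ≤ κ → sSup Λ < l

/-- The index category of ordinals `< l`. -/
abbrev Idx (l : Ordinal.{v}) : Type (v+1) := Set.Iio l

/-- All successor maps of a `l`-sequence belong to the class `D`. -/
def succMapsIn (D : MorphismProperty C) {l : Ordinal.{v}} (X : Idx l ⥤ C) : Prop :=
  ∀ (β : Idx l) (h : β.1 + 1 < l),
    D (X.map (homOfLE (le_of_lt (Order.lt_succ_of_not_isMax (not_isMax β.1))) :
      β ⟶ ⟨β.1 + 1, h⟩))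

/-- The inclusion of the stages below `β`. -/
def below {l : Ordinal.{v}} (β : Idx l) : Idx β.1 ⥤ Idx l :=
  Monotone.functor (f := fun o => (⟨o.1, Set.mem_Iio.mpr (lt_trans (Set.mem_Iio.mp o.2) (Set.mem_Iio.mp β.2))⟩ : Idx l))
    (fun _ _ hab => hab)

/-- The cocone on the restriction of the sequence below `β` with point `X.obj β`. -/
def coconeAt {l : Ordinal.{v}} (X : Idx l ⥤ C) (β : Idx l) : Cocone (below β ⋙ X) where
  pt := X.obj β
  ι := { app := fun o => X.map (homOfLE (le_of_lt (show (below β).obj o < β from Set.mem_Iio.mp o.2)))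
         naturality := fun a b f => by
           dsimp [below]
           rw [Category.comp_id, ← X.map_comp]
           congr 1 }

/-- A `l`-sequence is smooth (continuous) if at each limit stage it is a colimit
of the earlier stages. -/
def smooth {l : Ordinal.{v}} (X : Idx l ⥤ C) : Prop :=
  ∀ β : Idx l, Order.IsSuccLimit β.1 → Nonempty (IsColimit (coconeAt X β))

/-- `A` is `κ`-small relative to the class `D`. -/
def IsSmallRel (κ : Cardinal.{v+1}) (A : C) (D : MorphismProperty C) : Prop :=
  ∀ (l : Ordinal.{v}), kFiltered κ l →
    ∀ (X : Idx l ⥤ C), succMapsIn D X → smooth X →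
    ∀ (c : Cocone X), IsColimit c →
      (∀ f : A ⟶ c.pt, ∃ (β : Idx l) (g : A ⟶ X.obj β), g ≫ c.ι.app β = f) ∧
      (∀ (β : Idx l) (g h : A ⟶ X.obj β), g ≫ c.ι.app β = h ≫ c.ι.app β →
        ∃ (γ : Idx l) (le : β ≤ γ),
          g ≫ X.map (homOfLE le) = h ≫ X.map (homOfLE le))


/-- `g` is a pushout of a map in `I`-cof. -/
def IsPushoutOfCofOf (I : MorphismProperty C) : MorphismProperty C :=
  fun Z P g =>
    ∃ (A B : C) (i : A ⟶ B) (_ : cof I i) (a : A ⟶ Z) (k : B ⟶ P), IsPushout i a k g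

/-- `cof I` is stable under pushout. -/
lemma cof_of_isPushout (I : MorphismProperty C) {A B Z P : C}
    {i : A ⟶ B} (hi : cof I i) {a : A ⟶ Z} {k : B ⟶ P} {g : Z ⟶ P}
    (hpo : IsPushout i a k g) : cof I g := by
  intro E F p hp
  haveI := hi p hp
  constructor
  intro s t sq
  have sq' : CommSq (a ≫ s) i p (k ≫ t) := by
    constructor
    rw [Category.assoc, sq.w, ← Category.assoc, ← hpo.w, Category.assoc]
  obtain ⟨⟨⟨d, hd1, hd2⟩⟩⟩ := (hi p hp).sq_hasLift sq'
  refine ⟨⟨⟨hpo.desc d s hd1, ?_, ?_⟩⟩⟩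
  · exact hpo.inr_desc _ _ _
  · apply hpo.hom_ext
    · rw [← Category.assoc, hpo.inl_desc, hd2]
    · rw [← Category.assoc, hpo.inr_desc, sq.w]

/-- The key stage-by-stage lemma in the proof of the generalized small object argument:
given a smooth `l`-sequence `Z` starting at `X`, whose successor maps are pushouts of maps
of `I`-cof, together with compatible maps `ρ_β : Z_β ⟶ Y` factoring `f` such that at each
stage `β + 1` the universal factoring property of condition (2) holds, every commutative
square from a map `l : C' ⟶ D'` of `I` to `ρ_λ : Z_λ ⟶ Y` has its top map factoring
through some stage `Z_β` with `β < λ`, and admits a diagonal lift `D' ⟶ Z_λ`. -/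
theorem stage_factorization_and_lift
    [HasColimitsOfSize.{v+1, v+1} C] [HasColimitsOfSize.{v, v} C]
    (I : MorphismProperty C) (κ : Cardinal.{v+1})
    (hκ : ∀ ⦃A B : C⦄ (i : A ⟶ B), I i → IsSmallRel κ A (cof I))
    (l : Ordinal.{v}) (hlim : kFiltered κ l)
    {X Y : C} (f : X ⟶ Y)
    (Z : Idx l ⥤ C) (hsm : smooth Z)
    (hsucc : ∀ (β : Idx l) (h : β.1 + 1 < l),
      IsPushoutOfCofOf I (Z.map (homOfLE (le_of_lt
        (Order.lt_succ_of_not_isMax (not_isMax β.1))) : β ⟶ ⟨β.1 + 1, h⟩)))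
    (ρ : Z ⟶ (Functor.const (Idx l)).obj Y)
    (e0 : X ≅ Z.obj ⟨0, hlim.1.pos⟩) (hf : f = e0.hom ≫ ρ.app ⟨0, hlim.1.pos⟩)
    (c : Cocone Z) (hc : IsColimit c)
    (hstage : ∀ (β : Idx l) (h : β.1 + 1 < l) (i : Arrow C), I i.hom →
      ∀ (u : i.left ⟶ Z.obj β) (v : i.right ⟶ Y), u ≫ ρ.app β = i.hom ≫ v →
        ∃ k : i.right ⟶ Z.obj ⟨β.1 + 1, h⟩,
          i.hom ≫ k = u ≫ Z.map (homOfLE (le_of_lt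
            (Order.lt_succ_of_not_isMax (not_isMax β.1))) : β ⟶ ⟨β.1 + 1, h⟩) ∧
          k ≫ ρ.app ⟨β.1 + 1, h⟩ = v) :
    ∀ (C' D' : C) (lmap : C' ⟶ D'), I lmap →
      ∀ (u : C' ⟶ c.pt) (v : D' ⟶ Y),
        lmap ≫ v = u ≫ hc.desc (Cocone.mk Y ρ) →
        (∃ (β : Idx l) (g : C' ⟶ Z.obj β), g ≫ c.ι.app β = u) ∧
        (∃ w : D' ⟶ c.pt, lmap ≫ w = u ∧ w ≫ hc.desc (Cocone.mk Y ρ) = v) := by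
  intro C' D' lmap hl u v hsq
  have hsuccIn : succMapsIn (cof I) Z := by
    intro β h
    obtain ⟨A, B, i, hi, a, k, hpo⟩ := hsucc β h
    exact cof_of_isPushout I hi hpo
  obtain ⟨β, g, hg⟩ := (hκ lmap hl l hlim Z hsuccIn hsm c hc).1 u
  refine ⟨⟨β, g, hg⟩, ?_⟩
  have hβ1 : β.1 + 1 < l := by
    rw [Ordinal.add_one_eq_succ]; exact hlim.1.succ_lt β.2
  have hcomm : g ≫ ρ.app β = lmap ≫ v := by
    have : g ≫ c.ι.app β ≫ hc.desc (Cocone.mk Y ρ) = g ≫ ρ.app β := by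
      rw [hc.fac (Cocone.mk Y ρ) β]
    rw [hsq, ← hg, Category.assoc, this]
  obtain ⟨k, hk1, hk2⟩ := hstage β hβ1 (Arrow.mk lmap) hl g v hcomm
  simp only [Arrow.mk_hom] at hk1
  refine ⟨k ≫ c.ι.app ⟨β.1 + 1, hβ1⟩, ?_, ?_⟩
  · rw [← Category.assoc, hk1, Category.assoc, c.w, hg]
  · rw [Category.assoc, hc.fac (Cocone.mk Y ρ) ⟨β.1 + 1, hβ1⟩]
    exact hk2
end
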